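/- Let k = {((2 + cos 3θ)·cos θ, (2 + cos 3θ)·sin θ, sin 3θ) : 0 ≤ θ ≤ 2π} be the standard (1,3)-torus knot in ℝ³. Then for every integer n ≥ 0 the restriction of Wⁿ to k is injective and Wⁿ(k) = {((2 + cos 3θ)·cos(2ⁿθ), (2 + cos 3θ)·sin(2ⁿθ), sin 3θ) : 0 ≤ θ ≤ 2π}, the standard (2ⁿ,3)-torus knot; in particular k is iteratively injective with respect to W. -/

import Mathlib

open Set Real

/-- The ambient 3-space, `ℝ³`, modeled as `ℝ × ℝ × ℝ`. -/
abbrev E3 : Type := ℝ × ℝ × ℝ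

/-- The angle-doubling map `W` of `ℝ³`, determined by
`W(r cos θ, r sin θ, z) = (r cos 2θ, r sin 2θ, z)`. -/
noncomputable def Wmap : E3 → E3 := fun p =>
  if (p.1, p.2.1) = (0, 0) then p
  else ((p.1 ^ 2 - p.2.1 ^ 2) / Real.sqrt (p.1 ^ 2 + p.2.1 ^ 2),
        2 * p.1 * p.2.1 / Real.sqrt (p.1 ^ 2 + p.2.1 ^ 2),
        p.2.2)

/-- The standard `(a,3)`-torus curve `θ ↦ ((2+cos 3θ) cos aθ, (2+cos 3θ) sin aθ, sin 3θ)`. -/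
noncomputable def torusCurve (a : ℝ) : ℝ → E3 := fun θ =>
  ((2 + Real.cos (3 * θ)) * Real.cos (a * θ),
   (2 + Real.cos (3 * θ)) * Real.sin (a * θ),
   Real.sin (3 * θ))

/-! Along the curve the radius `2 + cos 3θ` is positive, so `W` doubles the polar angle and
`Wⁿ` carries the `(1,3)`-torus curve to the `(2ⁿ,3)`-torus curve parameter by parameter.
A point of the `(m,3)`-curve determines `3θ` and `mθ` modulo `2π`; when `m = 2ⁿ` is coprime
to `3`, this pins down `θ` modulo `2π`, hence the point of the `(1,3)`-curve. -/

theorem eq_zero_of_nsmul_eq_zero_of_coprime {G : Type*} [AddMonoid G] {g : G} {m n : ℕ}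
    (hmn : m.Coprime n) (hm : m • g = 0) (hn : n • g = 0) : g = 0 :=
  AddMonoid.addOrderOf_eq_one_iff.mp <| Nat.eq_one_of_dvd_coprimes hmn
    (addOrderOf_dvd_of_nsmul_eq_zero hm) (addOrderOf_dvd_of_nsmul_eq_zero hn)

theorem eq_and_coe_angle_eq_of_polar_eq {r₁ r₂ α₁ α₂ : ℝ} (h₁ : 0 < r₁)
    (h₂ : 0 < r₂) (hx : r₁ * cos α₁ = r₂ * cos α₂) (hy : r₁ * sin α₁ = r₂ * sin α₂) :
    r₁ = r₂ ∧ (α₁ : Angle) = α₂ := by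
  have hsq : r₁ ^ 2 = r₂ ^ 2 := by
    linear_combination (r₁ * cos α₁ + r₂ * cos α₂) * hx + (r₁ * sin α₁ + r₂ * sin α₂) * hy
      - r₁ ^ 2 * sin_sq_add_cos_sq α₁ + r₂ ^ 2 * sin_sq_add_cos_sq α₂
  obtain rfl : r₁ = r₂ := (sq_eq_sq₀ h₁.le h₂.le).mp hsq
  exact ⟨rfl, Angle.cos_sin_inj (mul_left_cancel₀ h₁.ne' hx) (mul_left_cancel₀ h₁.ne' hy)⟩

theorem Wmap_polar {r : ℝ} (hr : 0 ≤ r) (θ z : ℝ) :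
    Wmap (r * cos θ, r * sin θ, z) = (r * cos (2 * θ), r * sin (2 * θ), z) := by
  rcases hr.eq_or_lt with rfl | hr
  · simp [Wmap]
  have hnorm : sqrt ((r * cos θ) ^ 2 + (r * sin θ) ^ 2) = r := by
    rw [show (r * cos θ) ^ 2 + (r * sin θ) ^ 2 = r ^ 2 by
      linear_combination r ^ 2 * sin_sq_add_cos_sq θ, sqrt_sq hr.le]
  have hne : (r * cos θ, r * sin θ) ≠ ((0 : ℝ), 0) := fun h => by
    simp only [Prod.mk.injEq] at h
    simp only [h, zero_pow two_ne_zero, add_zero, sqrt_zero] at hnorm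
    exact hr.ne hnorm
  unfold Wmap
  rw [if_neg hne]
  simp only [hnorm, cos_two_mul', sin_two_mul, Prod.mk.injEq, and_true]
  constructor <;> field_simp

theorem torusCurve_radius_pos (θ : ℝ) : 0 < 2 + cos (3 * θ) := by
  linarith [neg_one_le_cos (3 * θ)]

theorem Wmap_torusCurve (a θ : ℝ) : Wmap (torusCurve a θ) = torusCurve (2 * a) θ := by
  simp only [torusCurve, Wmap_polar (torusCurve_radius_pos θ).le, mul_assoc]

theorem iterate_Wmap_torusCurve (n : ℕ) (a θ : ℝ) :
    Wmap^[n] (torusCurve a θ) = torusCurve (2 ^ n * a) θ := by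
  induction n with
  | zero => rw [Function.iterate_zero_apply, pow_zero, one_mul]
  | succ n ih => rw [Function.iterate_succ_apply', ih, Wmap_torusCurve, pow_succ', mul_assoc]

theorem torusCurve_eq_torusCurve_iff {a θ₁ θ₂ : ℝ} :
    torusCurve a θ₁ = torusCurve a θ₂ ↔
      ((3 * θ₁ : ℝ) : Angle) = (3 * θ₂ : ℝ) ∧ ((a * θ₁ : ℝ) : Angle) = (a * θ₂ : ℝ) := by
  simp only [torusCurve, Prod.mk.injEq]
  constructor
  · rintro ⟨hx, hy, hz⟩
    obtain ⟨hr, ha⟩ := eq_and_coe_angle_eq_of_polar_eq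
      (torusCurve_radius_pos θ₁) (torusCurve_radius_pos θ₂) hx hy
    exact ⟨Angle.cos_sin_inj (by linarith) hz, ha⟩
  · rintro ⟨h3, ha⟩
    simp only [← Angle.cos_coe, ← Angle.sin_coe, h3, ha, and_self]

theorem torusCurve_one_eq_of_torusCurve_eq {m : ℕ} (hm : m.Coprime 3) {θ₁ θ₂ : ℝ}
    (h : torusCurve m θ₁ = torusCurve m θ₂) : torusCurve 1 θ₁ = torusCurve 1 θ₂ := by
  have hnsmul (k : ℕ) :
      ((k * θ₁ : ℝ) : Angle) = (k * θ₂ : ℝ) ↔ k • ((θ₁ - θ₂ : ℝ) : Angle) = 0 := by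
    rw [← Angle.coe_nsmul, nsmul_eq_mul, mul_sub, Angle.coe_sub, sub_eq_zero]
  obtain ⟨h3, hm'⟩ := torusCurve_eq_torusCurve_iff.mp h
  have hθ : ((θ₁ - θ₂ : ℝ) : Angle) = 0 := eq_zero_of_nsmul_eq_zero_of_coprime hm
    ((hnsmul m).mp hm') ((hnsmul 3).mp (by exact_mod_cast h3))
  rw [torusCurve_eq_torusCurve_iff, one_mul, one_mul]
  exact ⟨by exact_mod_cast (hnsmul 3).mpr (by rw [hθ, smul_zero]),
    by rwa [Angle.coe_sub, sub_eq_zero] at hθ⟩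

/-- For the standard `(1,3)`-torus knot `k`, every iterate `Wⁿ` is injective on `k` and maps it
onto the standard `(2ⁿ,3)`-torus knot; in particular `k` is iteratively injective with respect
to `W`. -/
theorem Wmap_iterate_torus_knot :
    ∀ n : ℕ,
      Set.InjOn (Wmap^[n]) (torusCurve 1 '' Icc 0 (2 * π)) ∧
      Wmap^[n] '' (torusCurve 1 '' Icc 0 (2 * π)) =
        torusCurve (2 ^ n) '' Icc 0 (2 * π) := by
  intro n
  have hW (θ : ℝ) : Wmap^[n] (torusCurve 1 θ) = torusCurve ((2 ^ n : ℕ) : ℝ) θ := by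
    rw [iterate_Wmap_torusCurve, mul_one, Nat.cast_pow, Nat.cast_ofNat]
  refine ⟨?_, by simp only [image_image, hW, Nat.cast_pow, Nat.cast_ofNat]⟩
  rintro _ ⟨θ₁, -, rfl⟩ _ ⟨θ₂, -, rfl⟩ h
  rw [hW, hW] at h
  exact torusCurve_one_eq_of_torusCurve_eq (Nat.Coprime.pow_left n (by norm_num)) h
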